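/- Let a, b ∈ ℝ² be linearly independent vectors, let α, β, ζ₁, ζ₂ ∈ ℝ be arbitrary real scalars, and let r > 0. Then the set C := { (α‖x‖² + ⟨a,x⟩ + ζ₁, β‖x‖² + ⟨b,x⟩ + ζ₂) : x ∈ ℝ², ‖x‖ ≤ r } is a convex subset of ℝ². -/
import Mathlib


open scoped RealInnerProductSpace

lemma exists_dual_vec (a b : EuclideanSpace ℝ (Fin 2))
    (hab : LinearIndependent ℝ ![a, b]) (α β : ℝ) :
    ∃ d : EuclideanSpace ℝ (Fin 2), ⟪a, d⟫ = α ∧ ⟪b, d⟫ = β := by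
  have hcard : Fintype.card (Fin 2) = Module.finrank ℝ (EuclideanSpace ℝ (Fin 2)) := by simp
  let B := basisOfLinearIndependentOfCardEqFinrank hab hcard
  let f : EuclideanSpace ℝ (Fin 2) →ₗ[ℝ] ℝ := B.constr ℝ ![α, β]
  refine ⟨(InnerProductSpace.toDual ℝ _).symm (LinearMap.toContinuousLinearMap f), ?_, ?_⟩
  · rw [real_inner_comm, InnerProductSpace.toDual_symm_apply]
    show f a = α
    have : a = B 0 := by simp [B, coe_basisOfLinearIndependentOfCardEqFinrank]
    rw [this]
    simp [f]
  · rw [real_inner_comm, InnerProductSpace.toDual_symm_apply]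
    show f b = β
    have : b = B 1 := by simp [B, coe_basisOfLinearIndependentOfCardEqFinrank]
    rw [this]
    simp [f]

lemma inner_comb {E : Type*} [NormedAddCommGroup E] [InnerProductSpace ℝ E]
    (a x₁ x₂ d : E) (u v τ α : ℝ) (hda : ⟪a, d⟫ = α) :
    ⟪a, (u • x₁ + v • x₂) + τ • d⟫ = u * ⟪a, x₁⟫ + v * ⟪a, x₂⟫ + τ * α := by
  simp [inner_add_right, real_inner_smul_right, hda]

set_option maxHeartbeats 1000000 in
/-- For linearly independent `a, b ∈ ℝ²`, arbitrary real scalars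
`α, β, ζ₁, ζ₂`, and radius `r > 0`, the feasible output set
`C = { (α‖x‖² + ⟨a,x⟩ + ζ₁, β‖x‖² + ⟨b,x⟩ + ζ₂) : ‖x‖ ≤ r }` is convex. -/
theorem stmt1 (a b : EuclideanSpace ℝ (Fin 2)) (hab : LinearIndependent ℝ ![a, b])
    (α β ζ₁ ζ₂ r : ℝ) (hr : 0 < r) :
    Convex ℝ {p : ℝ × ℝ | ∃ x : EuclideanSpace ℝ (Fin 2), ‖x‖ ≤ r ∧
      p = (α * ‖x‖ ^ 2 + ⟪a, x⟫ + ζ₁, β * ‖x‖ ^ 2 + ⟪b, x⟫ + ζ₂)} := by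
  obtain ⟨d, hda, hdb⟩ := exists_dual_vec a b hab α β
  rintro p ⟨x₁, hx₁, rfl⟩ q ⟨x₂, hx₂, rfl⟩ u v hu hv huv
  set m : EuclideanSpace ℝ (Fin 2) := u • x₁ + v • x₂ with hm
  set T : ℝ := u * ‖x₁‖ ^ 2 + v * ‖x₂‖ ^ 2 with hT
  have hx₁0 := norm_nonneg x₁
  have hx₂0 := norm_nonneg x₂
  have hcs : ⟪x₁, x₂⟫ ≤ ‖x₁‖ * ‖x₂‖ := real_inner_le_norm x₁ x₂
  have hmsq : ‖m‖ ^ 2 = u ^ 2 * ‖x₁‖ ^ 2 + 2 * (u * v) * ⟪x₁, x₂⟫ + v ^ 2 * ‖x₂‖ ^ 2 := by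
    rw [hm, norm_add_sq_real, norm_smul, norm_smul, real_inner_smul_left, real_inner_smul_right,
      mul_pow, mul_pow, Real.norm_eq_abs, Real.norm_eq_abs, sq_abs, sq_abs]
    ring
  have hmT : ‖m‖ ^ 2 ≤ T := by nlinarith [sq_nonneg (‖x₁‖ - ‖x₂‖), mul_nonneg hu hv]
  have h1r : ‖x₁‖ ^ 2 ≤ r ^ 2 := by nlinarith
  have h2r : ‖x₂‖ ^ 2 ≤ r ^ 2 := by nlinarith
  have hTr : T ≤ r ^ 2 := by
    nlinarith [mul_le_mul_of_nonneg_left h1r hu, mul_le_mul_of_nonneg_left h2r hv]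
  have hT0 : 0 ≤ T := le_trans (sq_nonneg _) hmT
  have hcont : ContinuousOn (fun τ : ℝ => τ + ‖m + τ • d‖ ^ 2 - T) (Set.Icc 0 T) := by
    fun_prop
  have hivt := intermediate_value_Icc hT0 hcont
  have h0mem : (0 : ℝ) ∈ Set.Icc ((fun τ : ℝ => τ + ‖m + τ • d‖ ^ 2 - T) 0)
      ((fun τ : ℝ => τ + ‖m + τ • d‖ ^ 2 - T) T) := by
    constructor
    · simp only [zero_smul, add_zero]
      linarith
    · simp only
      nlinarith [sq_nonneg ‖m + T • d‖]
  obtain ⟨τ, hτmem, hτ⟩ := hivt h0mem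
  set x : EuclideanSpace ℝ (Fin 2) := m + τ • d with hx
  have hxsq : ‖x‖ ^ 2 = T - τ := by
    simp only at hτ
    linarith [hτ]
  have hxr : ‖x‖ ≤ r := by nlinarith [norm_nonneg x, hτmem.1]
  refine ⟨x, hxr, ?_⟩
  have hax : ⟪a, x⟫ = u * ⟪a, x₁⟫ + v * ⟪a, x₂⟫ + τ * α := by
    rw [hx, hm]; exact inner_comb a x₁ x₂ d u v τ α hda
  have hbx : ⟪b, x⟫ = u * ⟪b, x₁⟫ + v * ⟪b, x₂⟫ + τ * β := by
    rw [hx, hm]; exact inner_comb b x₁ x₂ d u v τ β hdb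
  refine Prod.ext ?_ ?_ <;>
    simp only [Prod.fst_add, Prod.smul_fst, Prod.snd_add, Prod.smul_snd, smul_eq_mul] <;>
    rw [hxsq]
  · rw [hax]; linear_combination ζ₁ * huv - α * hT
  · rw [hbx]; linear_combination ζ₂ * huv - β * hT
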